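/- Suppose the tuple {(n0,n1,n2), B, B_I} is admissible. Then for every x ∈ X, the full derivative vector x_D is recovered from the fundamental state Dx by x_D(s) = U1 (Dx)(s) + ∫_a^s R_{D,1}(s,θ) (Dx)(θ) dθ + ∫_s^b R_{D,2}(s,θ) (Dx)(θ) dθ for almost every s ∈ [a,b], where R_{D,2}(s,θ) := U2 T(s−a) B_Q(θ) and R_{D,1}(s,θ) := R_{D,2}(s,θ) + U2 Q(s−θ). -/

import Mathlib

open MeasureTheory Matrix Topology Filter

noncomputable section

namespace PIEpaper

/-- The Lebesgue measure restricted to the interval `[a,b]`. -/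
def μab (a b : ℝ) : Measure ℝ := volume.restrict (Set.Icc a b)

/-- A matrix-valued function on `[a,b]` is essentially bounded (belongs to `L∞`). -/
def EssBddMat {ι κ : Type*} (a b : ℝ) (M : ℝ → Matrix ι κ ℝ) : Prop :=
  Measurable (fun s i j => M s i j) ∧ ∃ C : ℝ, ∀ᵐ s ∂(μab a b), ∀ i j, |M s i j| ≤ C

/-- A matrix-valued function on `[a,b]` is (entrywise) square integrable. -/
def SqIntMat {ι κ : Type*} (a b : ℝ) (M : ℝ → Matrix ι κ ℝ) : Prop :=
  Measurable (fun s i j => M s i j) ∧ ∀ i j, MemLp (fun s => M s i j) 2 (μab a b)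

/-- A matrix-valued kernel `R : [a,b]² → ℝ^{ι×κ}` is separable if `R(s,θ) = F(s)ᵀ G(θ)`
for essentially bounded `F, G`. -/
def SepMat {ι κ : Type*} (a b : ℝ) (R : ℝ → ℝ → Matrix ι κ ℝ) : Prop :=
  ∃ (r : ℕ) (F : ℝ → Matrix (Fin r) ι ℝ) (G : ℝ → Matrix (Fin r) κ ℝ),
    EssBddMat a b F ∧ EssBddMat a b G ∧
    ∀ s ∈ Set.Icc a b, ∀ θ ∈ Set.Icc a b, R s θ = (F s)ᵀ * G θ

variable (a b : ℝ) (n0 n1 n2 : ℕ)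

/-- Index type for the PDE state blocks `(x0, x1, x2)`, and likewise for the
fundamental state `Dx = (x0, ∂ₛx1, ∂ₛ²x2)`; it has `n_x = n0+n1+n2` elements. -/
abbrev Ix := Fin n0 ⊕ (Fin n1 ⊕ Fin n2)

/-- Index type for the boundary core `x_c = (x1, x2, ∂ₛx2)`; it has `n_S = n1+2n2` elements. -/
abbrev Ic := Fin n1 ⊕ (Fin n2 ⊕ Fin n2)

/-- Index type for the first two block rows `(n1- and n2-sized)`. -/
abbrev I12 := Fin n1 ⊕ Fin n2

/-- Index type for the full derivative vector
`x_D = (x0, x1, x2, ∂ₛx1, ∂ₛx2, ∂ₛ²x2)` (with `n_x + n_S` elements), organized into the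
fundamental-state block `(x0, ∂ₛx1, ∂ₛ²x2)` (left) and the core block `(x1, x2, ∂ₛx2)` (right). -/
abbrev ID := Ix n0 n1 n2 ⊕ Ic n1 n2

/-- An element of `W^n = W_0^{n0} × W_1^{n1} × W_2^{n2}` on `[a,b]`, encoded through its
components together with their (weak) derivatives: `x1 ∈ W_1` and `x2 ∈ W_2` are identified
with their absolutely continuous representatives, i.e. they satisfy the fundamental theorem
of calculus with square-integrable derivatives `dx1 = ∂ₛx1`, `dx2 = ∂ₛx2`, `ddx2 = ∂ₛ²x2`. -/
structure State where
  x0 : ℝ → Fin n0 → ℝ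
  x1 : ℝ → Fin n1 → ℝ
  dx1 : ℝ → Fin n1 → ℝ
  x2 : ℝ → Fin n2 → ℝ
  dx2 : ℝ → Fin n2 → ℝ
  ddx2 : ℝ → Fin n2 → ℝ
  memLp_x0 : MemLp x0 2 (μab a b)
  memLp_dx1 : MemLp dx1 2 (μab a b)
  memLp_dx2 : MemLp dx2 2 (μab a b)
  memLp_ddx2 : MemLp ddx2 2 (μab a b)
  ftc_x1 : ∀ s ∈ Set.Icc a b, ∀ i, x1 s i = x1 a i + ∫ θ in a..s, dx1 θ i
  ftc_x2 : ∀ s ∈ Set.Icc a b, ∀ i, x2 s i = x2 a i + ∫ θ in a..s, dx2 θ i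
  ftc_dx2 : ∀ s ∈ Set.Icc a b, ∀ i, dx2 s i = dx2 a i + ∫ θ in a..s, ddx2 θ i

variable {a b n0 n1 n2}

/-- The PDE state `x = (x0, x1, x2)` as an `ℝ^{n_x}`-valued function. -/
def xfun (x : State a b n0 n1 n2) (s : ℝ) : Ix n0 n1 n2 → ℝ :=
  Sum.elim (x.x0 s) (Sum.elim (x.x1 s) (x.x2 s))

/-- The fundamental state `Dx = (x0, ∂ₛx1, ∂ₛ²x2)` as an `ℝ^{n_x}`-valued function. -/
def Dx (x : State a b n0 n1 n2) (s : ℝ) : Ix n0 n1 n2 → ℝ :=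
  Sum.elim (x.x0 s) (Sum.elim (x.dx1 s) (x.ddx2 s))

/-- The boundary core `x_c = (x1, x2, ∂ₛx2)` as an `ℝ^{n_S}`-valued function. -/
def xc (x : State a b n0 n1 n2) (s : ℝ) : Ic n1 n2 → ℝ :=
  Sum.elim (x.x1 s) (Sum.elim (x.x2 s) (x.dx2 s))

/-- The full derivative vector `x_D = (x0, x1, x2, ∂ₛx1, ∂ₛx2, ∂ₛ²x2)`. -/
def xD (x : State a b n0 n1 n2) (s : ℝ) : ID n0 n1 n2 → ℝ :=
  Sum.elim (Dx x s) (xc x s)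

/-- The boundary-value vector `x_b = (x_c(a), x_c(b)) ∈ ℝ^{2 n_S}`. -/
def xb (x : State a b n0 n1 n2) : (Ic n1 n2 ⊕ Ic n1 n2) → ℝ :=
  Sum.elim (xc x a) (xc x b)

variable (a b n0 n1 n2)

/-- `T(η) = [[I,0,0],[0,I,ηI],[0,0,I]] ∈ ℝ^{n_S × n_S}`. -/
def Tmat (η : ℝ) : Matrix (Ic n1 n2) (Ic n1 n2) ℝ :=
  Matrix.of fun i j =>
    match i, j with
    | .inl i, .inl j => if i = j then (1:ℝ) else 0
    | .inr (.inl i), .inr (.inl j) => if i = j then (1:ℝ) else 0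
    | .inr (.inl i), .inr (.inr j) => if i = j then η else 0
    | .inr (.inr i), .inr (.inr j) => if i = j then (1:ℝ) else 0
    | _, _ => 0

/-- `Q(η) = [[0,I_{n1},0],[0,0,ηI_{n2}],[0,0,I_{n2}]] ∈ ℝ^{n_S × n_x}`. -/
def Qmat (η : ℝ) : Matrix (Ic n1 n2) (Ix n0 n1 n2) ℝ :=
  Matrix.of fun i j =>
    match i, j with
    | .inl i, .inr (.inl j) => if i = j then (1:ℝ) else 0
    | .inr (.inl i), .inr (.inr j) => if i = j then η else 0
    | .inr (.inr i), .inr (.inr j) => if i = j then (1:ℝ) else 0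
    | _, _ => 0

/-- Embedding of the first two block rows into the `x_c` index. -/
def emb12 : I12 n1 n2 → Ic n1 n2 := Sum.elim Sum.inl (fun k => Sum.inr (Sum.inl k))

/-- `T1(η)`: the first two block rows of `T(η)`. -/
def T1mat (η : ℝ) : Matrix (I12 n1 n2) (Ic n1 n2) ℝ :=
  Matrix.of fun i j => Tmat n1 n2 η (emb12 n1 n2 i) j

/-- `Q1(η)`: the first two block rows of `Q(η)`. -/
def Q1mat (η : ℝ) : Matrix (I12 n1 n2) (Ix n0 n1 n2) ℝ :=
  Matrix.of fun i j => Qmat n0 n1 n2 η (emb12 n1 n2 i) j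

/-- `U1 ∈ ℝ^{(n_x+n_S) × n_x}`: the 0-1 matrix placing `(v0,v1,v2)` into the
`x0`, `∂ₛx1` and `∂ₛ²x2` blocks of the `x_D` ordering. -/
def U1 : Matrix (ID n0 n1 n2) (Ix n0 n1 n2) ℝ :=
  Matrix.of fun i j =>
    match i with
    | .inl i' => if i' = j then (1:ℝ) else 0
    | .inr _ => 0

/-- `U2 ∈ ℝ^{(n_x+n_S) × n_S}`: the 0-1 matrix placing `(w1,w2,w3)` into the
`x1`, `x2` and `∂ₛx2` blocks of the `x_D` ordering. -/
def U2 : Matrix (ID n0 n1 n2) (Ic n1 n2) ℝ :=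
  Matrix.of fun i j =>
    match i with
    | .inl _ => (0:ℝ)
    | .inr i' => if i' = j then 1 else 0

/-- The stacked matrix `[T(0); T(b-a)] ∈ ℝ^{2n_S × n_S}`. -/
def Tstack : Matrix (Ic n1 n2 ⊕ Ic n1 n2) (Ic n1 n2) ℝ :=
  Matrix.of fun i j =>
    match i with
    | .inl i' => Tmat n1 n2 0 i' j
    | .inr i' => Tmat n1 n2 (b - a) i' j

/-- The stacked matrix `[0_{n_S×n_x}; Q(η)] ∈ ℝ^{2n_S × n_x}`. -/
def Qstack (η : ℝ) : Matrix (Ic n1 n2 ⊕ Ic n1 n2) (Ix n0 n1 n2) ℝ :=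
  Matrix.of fun i j =>
    match i with
    | .inl _ => (0:ℝ)
    | .inr i' => Qmat n0 n1 n2 η i' j

variable (B : Matrix (Ic n1 n2) (Ic n1 n2 ⊕ Ic n1 n2) ℝ)
variable (B_I : ℝ → Matrix (Ic n1 n2) (ID n0 n1 n2) ℝ)

/-- `B_T = B [T(0); T(b−a)] − ∫_a^b B_I(s) U2 T(s−a) ds`. -/
def BT : Matrix (Ic n1 n2) (Ic n1 n2) ℝ :=
  B * Tstack a b n1 n2 -
    Matrix.of fun i j => ∫ s in a..b, (B_I s * U2 n0 n1 n2 * Tmat n1 n2 (s - a)) i j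

/-- Admissibility of the boundary conditions: `B_T` is invertible. -/
def Admissible : Prop := IsUnit (BT a b n0 n1 n2 B B_I).det

/-- `B_Q(s) = B_T⁻¹ ( B_I(s) U1 − B [0; Q(b−s)] + ∫_s^b B_I(θ) U2 Q(θ−s) dθ )`. -/
def BQ (s : ℝ) : Matrix (Ic n1 n2) (Ix n0 n1 n2) ℝ :=
  (BT a b n0 n1 n2 B B_I)⁻¹ *
    (B_I s * U1 n0 n1 n2 - B * Qstack n0 n1 n2 (b - s) +
      Matrix.of fun i j => ∫ θ in s..b, (B_I θ * U2 n0 n1 n2 * Qmat n0 n1 n2 (θ - s)) i j)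

/-- The boundary condition `B x_b = ∫_a^b B_I(s) x_D(s) ds` defining the set `X`;
  together with the regularity encoded in `State` this says `x ∈ X`. -/
def BCholds (x : State a b n0 n1 n2) : Prop :=
  ∀ i, B.mulVec (xb x) i = ∫ s in a..b, (B_I s).mulVec (xD x s) i

/-- `G0 = diag(I_{n0}, 0_{n1+n2})`. -/
def G0 : Matrix (Ix n0 n1 n2) (Ix n0 n1 n2) ℝ :=
  Matrix.of fun i j =>
    match i, j with
    | .inl i', .inl j' => if i' = j' then (1:ℝ) else 0
    | _, _ => 0

/-- `G2(s,θ) = [0_{n0×n_x}; T1(s−a) B_Q(θ)]`. -/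
def G2 (s θ : ℝ) : Matrix (Ix n0 n1 n2) (Ix n0 n1 n2) ℝ :=
  Matrix.of fun i j =>
    match i with
    | .inl _ => (0:ℝ)
    | .inr i' => (T1mat n1 n2 (s - a) * BQ a b n0 n1 n2 B B_I θ) i' j

/-- `G1(s,θ) = [0_{n0×n_x}; Q1(s−θ)] + G2(s,θ)`. -/
def G1 (s θ : ℝ) : Matrix (Ix n0 n1 n2) (Ix n0 n1 n2) ℝ :=
  (Matrix.of fun i j =>
    match i with
    | .inl _ => (0:ℝ)
    | .inr i' => Q1mat n0 n1 n2 (s - θ) i' j) + G2 a b n0 n1 n2 B B_I s θ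

/-- The PI operator `𝒯`, acting on (representatives of) functions in `L2^{n_x}`:
`(𝒯v)(s) = G0 v(s) + ∫_a^s G1(s,θ) v(θ) dθ + ∫_s^b G2(s,θ) v(θ) dθ`. -/
def Tfun (v : ℝ → Ix n0 n1 n2 → ℝ) (s : ℝ) : Ix n0 n1 n2 → ℝ := fun i =>
  (G0 n0 n1 n2).mulVec (v s) i
  + (∫ θ in a..s, (G1 a b n0 n1 n2 B B_I s θ).mulVec (v θ) i)
  + (∫ θ in s..b, (G2 a b n0 n1 n2 B B_I s θ).mulVec (v θ) i)

/-- `R_{D,2}(s,θ) = U2 T(s−a) B_Q(θ)`. -/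
def RD2 (s θ : ℝ) : Matrix (ID n0 n1 n2) (Ix n0 n1 n2) ℝ :=
  U2 n0 n1 n2 * Tmat n1 n2 (s - a) * BQ a b n0 n1 n2 B B_I θ

/-- `R_{D,1}(s,θ) = R_{D,2}(s,θ) + U2 Q(s−θ)`. -/
def RD1 (s θ : ℝ) : Matrix (ID n0 n1 n2) (Ix n0 n1 n2) ℝ :=
  RD2 a b n0 n1 n2 B B_I s θ + U2 n0 n1 n2 * Qmat n0 n1 n2 (s - θ)

end PIEpaper

namespace PIEpaper
variable (a b : ℝ) (n0 n1 n2 : ℕ)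
variable (B : Matrix (Ic n1 n2) (Ic n1 n2 ⊕ Ic n1 n2) ℝ)
variable (B_I : ℝ → Matrix (Ic n1 n2) (ID n0 n1 n2) ℝ)

/-- The `L2[a,b]` norm of an `ℝ^ι`-valued function. -/
def L2norm {ι : Type*} [Fintype ι] (f : ℝ → ι → ℝ) : ℝ :=
  Real.sqrt (∫ s in a..b, ∑ i, (f s i) ^ 2)

/-- The `L2[a,b]` inner product of two `ℝ^ι`-valued functions. -/
def L2inner {ι : Type*} [Fintype ι] (f g : ℝ → ι → ℝ) : ℝ :=
  ∫ s in a..b, ∑ i, f s i * g s i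

variable (A0 : ℝ → Matrix (Ix n0 n1 n2) (ID n0 n1 n2) ℝ)
variable (A1 A2 : ℝ → ℝ → Matrix (Ix n0 n1 n2) (ID n0 n1 n2) ℝ)

/-- `Â0(s) = A0(s) U1`. -/
def Ahat0 (s : ℝ) : Matrix (Ix n0 n1 n2) (Ix n0 n1 n2) ℝ := A0 s * U1 n0 n1 n2

/-- `Â1(s,θ)`. -/
def Ahat1 (s θ : ℝ) : Matrix (Ix n0 n1 n2) (Ix n0 n1 n2) ℝ :=
  A0 s * RD1 a b n0 n1 n2 B B_I s θ + A1 s θ * U1 n0 n1 n2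
  + (Matrix.of fun i j => ∫ β in a..θ, (A1 s β * RD2 a b n0 n1 n2 B B_I β θ) i j)
  + (Matrix.of fun i j => ∫ β in θ..s, (A1 s β * RD1 a b n0 n1 n2 B B_I β θ) i j)
  + (Matrix.of fun i j => ∫ β in s..b, (A2 s β * RD1 a b n0 n1 n2 B B_I β θ) i j)

/-- `Â2(s,θ)`. -/
def Ahat2 (s θ : ℝ) : Matrix (Ix n0 n1 n2) (Ix n0 n1 n2) ℝ :=
  A0 s * RD2 a b n0 n1 n2 B B_I s θ + A2 s θ * U1 n0 n1 n2
  + (Matrix.of fun i j => ∫ β in a..s, (A1 s β * RD2 a b n0 n1 n2 B B_I β θ) i j)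
  + (Matrix.of fun i j => ∫ β in s..θ, (A2 s β * RD2 a b n0 n1 n2 B B_I β θ) i j)
  + (Matrix.of fun i j => ∫ β in θ..b, (A2 s β * RD1 a b n0 n1 n2 B B_I β θ) i j)

/-- The PI operator `𝒜`:
`(𝒜v)(s) = Â0(s) v(s) + ∫_a^s Â1(s,θ) v(θ) dθ + ∫_s^b Â2(s,θ) v(θ) dθ`. -/
def Afun (v : ℝ → Ix n0 n1 n2 → ℝ) (s : ℝ) : Ix n0 n1 n2 → ℝ := fun i =>
  (Ahat0 n0 n1 n2 A0 s).mulVec (v s) i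
  + (∫ θ in a..s, (Ahat1 a b n0 n1 n2 B B_I A0 A1 A2 s θ).mulVec (v θ) i)
  + (∫ θ in s..b, (Ahat2 a b n0 n1 n2 B B_I A0 A1 A2 s θ).mulVec (v θ) i)

/-- The right-hand side of the PDE dynamics:
`A0(s) x_D(s) + ∫_a^s A1(s,θ) x_D(θ) dθ + ∫_s^b A2(s,θ) x_D(θ) dθ`. -/
def PDErhs (x : State a b n0 n1 n2) (s : ℝ) : Ix n0 n1 n2 → ℝ := fun i =>
  (A0 s).mulVec (xD x s) i
  + (∫ θ in a..s, (A1 s θ).mulVec (xD x θ) i)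
  + (∫ θ in s..b, (A2 s θ).mulVec (xD x θ) i)

/-- `t ↦ u(t)` is Fréchet differentiable at `t` with respect to the `L2[a,b]` norm,
with derivative `g`. -/
def HasL2DerivAt (u : ℝ → ℝ → Ix n0 n1 n2 → ℝ) (g : ℝ → Ix n0 n1 n2 → ℝ) (t : ℝ) : Prop :=
  Tendsto (fun h : ℝ =>
      L2norm a b (fun s i => (u (t + h) s i - u t s i) / h - g s i))
    (nhdsWithin 0 {0}ᶜ) (nhds 0)

/-- `t ↦ u(t)` is Fréchet differentiable at `t` with respect to the `𝒯`-norm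
`v ↦ ‖𝒯v‖_{L2}`, with derivative `g`. -/
def HasTDerivAt (u : ℝ → ℝ → Ix n0 n1 n2 → ℝ) (g : ℝ → Ix n0 n1 n2 → ℝ) (t : ℝ) : Prop :=
  Tendsto (fun h : ℝ =>
      L2norm a b (Tfun a b n0 n1 n2 B B_I
        (fun s i => (u (t + h) s i - u t s i) / h - g s i)))
    (nhdsWithin 0 {0}ᶜ) (nhds 0)

/-- `x : [0,∞) → W^n` satisfies the PDE defined by `{(n0,n1,n2), B, B_I, A0, A1, A2}` with
initial condition `x⁰ ∈ X`: `x(t) ∈ X` for all `t ≥ 0`, `x(0) = x⁰`, and for almost every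
`t ≥ 0`, `x` is Fréchet differentiable (w.r.t. the `L2` norm) at `t` with derivative `ẋ(t)`
satisfying the dynamics for almost every `s ∈ [a,b]`. -/
def SatisfiesPDE (x : ℝ → State a b n0 n1 n2) (x0 : State a b n0 n1 n2) : Prop :=
  (∀ t, 0 ≤ t → BCholds a b n0 n1 n2 B B_I (x t)) ∧
  (∀ᵐ s ∂(μab a b), ∀ i, xfun (x 0) s i = xfun x0 s i) ∧
  (∀ᵐ t ∂(volume.restrict (Set.Ici (0:ℝ))), ∃ g : ℝ → Ix n0 n1 n2 → ℝ,
    HasL2DerivAt a b n0 n1 n2 (fun τ => xfun (x τ)) g t ∧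
    ∀ᵐ s ∂(μab a b), ∀ i, g s i = PDErhs a b n0 n1 n2 A0 A1 A2 (x t) s i)

/-- `x_f : [0,∞) → L2^{n_x}` satisfies the PIE defined by `{𝒯, 𝒜}` with initial condition
`x_f⁰ ∈ L2^{n_x}`: `x_f(t) ∈ L2` for all `t ≥ 0`, `x_f(0) = x_f⁰`, and for almost every
`t ≥ 0`, `x_f` is Fréchet differentiable w.r.t. the `𝒯`-norm at `t` with derivative
`ẋ_f(t)` satisfying `𝒯 ẋ_f(t) = 𝒜 x_f(t)` for almost every `s ∈ [a,b]`. -/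
def SatisfiesPIE (xf : ℝ → ℝ → Ix n0 n1 n2 → ℝ) (xf0 : ℝ → Ix n0 n1 n2 → ℝ) : Prop :=
  (∀ t, 0 ≤ t → MemLp (xf t) 2 (μab a b)) ∧
  (∀ᵐ s ∂(μab a b), ∀ i, xf 0 s i = xf0 s i) ∧
  (∀ᵐ t ∂(volume.restrict (Set.Ici (0:ℝ))), ∃ g : ℝ → Ix n0 n1 n2 → ℝ,
    HasTDerivAt a b n0 n1 n2 B B_I xf g t ∧
    ∀ᵐ s ∂(μab a b), ∀ i,
      Tfun a b n0 n1 n2 B B_I g s i = Afun a b n0 n1 n2 B B_I A0 A1 A2 (xf t) s i)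

/-- The `X`-norm `‖x‖_X = (Σ_{i=0}^2 ‖∂ₛ^i x_i‖²_{L2})^{1/2}`. -/
def normX (x : State a b n0 n1 n2) : ℝ :=
  Real.sqrt ((L2norm a b x.x0) ^ 2 + (L2norm a b x.dx1) ^ 2 + (L2norm a b x.ddx2) ^ 2)

/-- The Sobolev-type norm `‖x‖_H = Σ_{i=0}^2 Σ_{j=0}^i ‖∂ₛ^j x_i‖_{L2}`. -/
def normH (x : State a b n0 n1 n2) : ℝ :=
  L2norm a b x.x0 + (L2norm a b x.x1 + L2norm a b x.dx1)
    + (L2norm a b x.x2 + L2norm a b x.dx2 + L2norm a b x.ddx2)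

/-- The PDE defined by `{(n0,n1,n2), B, B_I, A0, A1, A2}` is exponentially stable. -/
def ExpStablePDE : Prop :=
  ∃ M > (0:ℝ), ∃ α > (0:ℝ), ∀ x0 : State a b n0 n1 n2, BCholds a b n0 n1 n2 B B_I x0 →
    ∀ x : ℝ → State a b n0 n1 n2, SatisfiesPDE a b n0 n1 n2 B B_I A0 A1 A2 x x0 →
      ∀ t, 0 ≤ t → normH a b n0 n1 n2 (x t) ≤ M * normH a b n0 n1 n2 x0 * Real.exp (-α * t)

/-- The PIE defined by `{𝒯, 𝒜}` is exponentially stable. -/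
def ExpStablePIE : Prop :=
  ∃ M > (0:ℝ), ∃ α > (0:ℝ), ∀ xf0 : ℝ → Ix n0 n1 n2 → ℝ, MemLp xf0 2 (μab a b) →
    ∀ xf : ℝ → ℝ → Ix n0 n1 n2 → ℝ,
      SatisfiesPIE a b n0 n1 n2 B B_I A0 A1 A2 xf xf0 →
      ∀ t, 0 ≤ t → L2norm a b (xf t) ≤ M * L2norm a b xf0 * Real.exp (-α * t)

/-- The `X`-inner product `⟨u,w⟩_X = Σ_{i=0}^2 ⟨∂ₛ^i u_i, ∂ₛ^i w_i⟩_{L2}` of two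
`ℝ^{n_x}`-valued functions, where the spatial derivatives of the `W_1`- and `W_2`-blocks
are taken classically (they exist a.e. for elements of `X`). -/
def XinnerF (u w : ℝ → Ix n0 n1 n2 → ℝ) : ℝ :=
  (∫ s in a..b, ∑ i : Fin n0, u s (Sum.inl i) * w s (Sum.inl i))
  + (∫ s in a..b, ∑ i : Fin n1,
      deriv (fun t => u t (Sum.inr (Sum.inl i))) s *
      deriv (fun t => w t (Sum.inr (Sum.inl i))) s)
  + (∫ s in a..b, ∑ i : Fin n2,
      deriv (deriv (fun t => u t (Sum.inr (Sum.inr i)))) s *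
      deriv (deriv (fun t => w t (Sum.inr (Sum.inr i)))) s)

/-- The `X`-distance between two elements of `X`, induced by the `X`-norm:
`‖u − v‖_X = ‖Du − Dv‖_{L2}`. -/
def distX (u v : State a b n0 n1 n2) : ℝ :=
  Real.sqrt (∫ s in a..b, ∑ i, (Dx u s i - Dx v s i) ^ 2)

end PIEpaper
/-!
Writing `x_c(s) = T(s-a) x_c(a) + ∫_a^s Q(s-θ) Dx(θ) dθ` (the fundamental theorem of calculus,
applied twice to `x2`) and `x_D = U1 Dx + U2 x_c`, the boundary condition becomes, after exchanging
the order of integration in its double integral, the linear equation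
`B_T x_c(a) = ∫_a^b B_T B_Q(θ) Dx(θ) dθ`. Admissibility lets us solve it for `x_c(a)`;
substituting back into `x_D(s)` and splitting `∫_a^b` at `s` produces the kernels `R_{D,1}` and
`R_{D,2}`.
-/

namespace PIEpaper

open Set

instance (a b : ℝ) : IsFiniteMeasure (μab a b) :=
  ⟨by rw [μab, Measure.restrict_apply_univ]; exact measure_Icc_lt_top⟩

section IntervalAnalysis

variable {a b : ℝ}

lemma memLp_of_continuousOn_Icc {f : ℝ → ℝ} (hf : ContinuousOn f (Icc a b)) (p : ENNReal) :
    MemLp f p (μab a b) := by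
  obtain ⟨C, hC⟩ := isCompact_Icc.exists_bound_of_continuousOn hf
  exact (memLp_top_of_bound (hf.aestronglyMeasurable measurableSet_Icc) C
    ((ae_restrict_mem measurableSet_Icc).mono hC)).mono_exponent le_top

lemma memLp_mul_of_continuousOn {f c : ℝ → ℝ} {p : ENNReal} (hf : MemLp f p (μab a b))
    (hc : ContinuousOn c (Icc a b)) : MemLp (fun θ => c θ * f θ) p (μab a b) :=
  hf.mul' (memLp_of_continuousOn_Icc hc ⊤)

lemma intervalIntegrable_of_integrable_μab {f : ℝ → ℝ} (hf : Integrable f (μab a b))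
    {c d : ℝ} (hc : c ∈ Icc a b) (hd : d ∈ Icc a b) : IntervalIntegrable f volume c d :=
  (IntegrableOn.mono_set hf (uIcc_subset_Icc hc hd)).intervalIntegrable

lemma continuousOn_primitive_Icc (hab : a ≤ b) {g : ℝ → ℝ} (hg : Integrable g (μab a b)) :
    ContinuousOn (fun s => ∫ θ in a..s, g θ) (Icc a b) := by
  have := intervalIntegral.continuousOn_primitive_interval (μ := volume)
    (by rw [uIcc_of_le hab]; exact hg)
  rwa [uIcc_of_le hab] at this

lemma continuousOn_primitive_left_Icc (hab : a ≤ b) {g : ℝ → ℝ}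
    (hg : Integrable g (μab a b)) : ContinuousOn (fun θ => ∫ s in θ..b, g s) (Icc a b) := by
  have := intervalIntegral.continuousOn_primitive_interval_left (μ := volume)
    (by rw [uIcc_of_le hab]; exact hg)
  rwa [uIcc_of_le hab] at this

lemma continuousOn_integral_affine_kernel (hab : a ≤ b) {X Y : ℝ → ℝ}
    (hX : Integrable X (μab a b)) (hY : Integrable Y (μab a b)) :
    ContinuousOn (fun θ => ∫ s in θ..b, (X s + (s - θ) * Y s)) (Icc a b) := by
  have hb : b ∈ Icc a b := right_mem_Icc.mpr hab
  have hsY : Integrable (fun s => s * Y s) (μab a b) :=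
    (memLp_mul_of_continuousOn (memLp_one_iff_integrable.2 hY) continuousOn_id).integrable
      le_rfl
  refine ((continuousOn_primitive_left_Icc hab hX).add
    ((continuousOn_primitive_left_Icc hab hsY).sub
      (continuousOn_id.mul (continuousOn_primitive_left_Icc hab hY)))).congr fun θ hθ => ?_
  have iX := intervalIntegrable_of_integrable_μab hX hθ hb
  have iY := intervalIntegrable_of_integrable_μab hY hθ hb
  have isY := intervalIntegrable_of_integrable_μab hsY hθ hb
  simp only [sub_mul]
  rw [intervalIntegral.integral_add iX (isY.sub (iY.const_mul θ)),
    intervalIntegral.integral_sub isY (iY.const_mul θ), intervalIntegral.integral_const_mul]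
  rfl

lemma integral_integral_triangle_swap {c d : ℝ} (hcd : c ≤ d) {f : ℝ → ℝ → ℝ}
    (hf : Integrable (fun p : ℝ × ℝ => f p.1 p.2)
      ((volume.restrict (Ioc c d)).prod (volume.restrict (Ioc c d)))) :
    ∫ s in c..d, ∫ θ in c..s, f s θ = ∫ θ in c..d, ∫ s in θ..d, f s θ := by
  set μ := volume.restrict (Ioc c d)
  set g : ℝ → ℝ → ℝ := fun s θ =>
    {p : ℝ × ℝ | p.2 ≤ p.1}.indicator (Function.uncurry f) (s, θ)
  have hg : Integrable (Function.uncurry g) (μ.prod μ) :=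
    hf.indicator (measurableSet_le measurable_snd measurable_fst)
  have hL : ∫ s in c..d, ∫ θ in c..s, f s θ = ∫ s, ∫ θ, g s θ ∂μ ∂μ := by
    rw [intervalIntegral.integral_of_le hcd]
    refine setIntegral_congr_fun measurableSet_Ioc fun s hs => ?_
    have : (fun θ => g s θ) = (Iic s).indicator (f s) := by
      ext θ; simp [g, Set.indicator_apply]
    rw [this, setIntegral_indicator measurableSet_Iic, Ioc_inter_Iic, min_eq_right hs.2,
      intervalIntegral.integral_of_le hs.1.le]
  have hR : ∫ θ in c..d, ∫ s in θ..d, f s θ = ∫ θ, ∫ s, g s θ ∂μ ∂μ := by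
    rw [intervalIntegral.integral_of_le hcd]
    refine setIntegral_congr_fun measurableSet_Ioc fun θ hθ => ?_
    have : (fun s => g s θ) = (Ici θ).indicator (fun s => f s θ) := by
      ext s; simp [g, Set.indicator_apply]
    have hI : Ioc c d ∩ Ici θ = Icc θ d := by
      ext s
      exact ⟨fun ⟨⟨_, hs⟩, hθs⟩ => ⟨hθs, hs⟩,
        fun ⟨hθs, hs⟩ => ⟨⟨hθ.1.trans_le hθs, hs⟩, hθs⟩⟩
    rw [this, setIntegral_indicator measurableSet_Ici, hI, integral_Icc_eq_integral_Ioc,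
      intervalIntegral.integral_of_le hθ.2]
  rw [hL, hR, integral_integral_swap hg]

lemma integrable_prod_mul_of_continuous {c d : ℝ} {u w : ℝ → ℝ}
    (hu : IntegrableOn u (Ioc c d)) (hw : IntegrableOn w (Ioc c d))
    {g : ℝ × ℝ → ℝ} (hg : Continuous g) :
    Integrable (fun p : ℝ × ℝ => u p.1 * (g p * w p.2))
      ((volume.restrict (Ioc c d)).prod (volume.restrict (Ioc c d))) := by
  obtain ⟨C, hC⟩ := (isCompact_Icc.prod isCompact_Icc).exists_bound_of_continuousOn
    (s := Icc c d ×ˢ Icc c d) hg.continuousOn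
  have hbd : ∀ᵐ p ∂((volume.restrict (Ioc c d)).prod (volume.restrict (Ioc c d))),
      ‖g p‖ ≤ C := by
    rw [Measure.prod_restrict]
    exact (ae_restrict_mem (measurableSet_Ioc.prod measurableSet_Ioc)).mono fun p hp =>
      hC p ⟨Ioc_subset_Icc_self hp.1, Ioc_subset_Icc_self hp.2⟩
  exact ((hu.mul_prod hw).bdd_mul hg.aestronglyMeasurable hbd).congr
    (Eventually.of_forall fun p => by ring)

lemma taylor_of_primitive (hab : a ≤ b) {f g h : ℝ → ℝ} (hh : Integrable h (μab a b))
    (hf : ∀ s ∈ Icc a b, f s = f a + ∫ θ in a..s, g θ)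
    (hg : ∀ s ∈ Icc a b, g s = g a + ∫ θ in a..s, h θ) {s : ℝ} (hs : s ∈ Icc a b) :
    f s = f a + (s - a) * g a + ∫ θ in a..s, (s - θ) * h θ := by
  have hsub : Icc a s ⊆ Icc a b := Icc_subset_Icc le_rfl hs.2
  have hH : IntervalIntegrable (fun θ => ∫ β in a..θ, h β) volume a s :=
    ((continuousOn_primitive_Icc hab hh).mono hsub).intervalIntegrable_of_Icc hs.1
  have hprod : Integrable (fun p : ℝ × ℝ => h p.2)
      ((volume.restrict (Ioc a s)).prod (volume.restrict (Ioc a s))) := by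
    have hIoc : Ioc a s ⊆ Icc a b := Ioc_subset_Icc_self.trans hsub
    simpa using integrable_prod_mul_of_continuous
      (integrable_const (1 : ℝ)) (IntegrableOn.mono_set hh hIoc) (g := fun _ => 1)
      continuous_const
  calc f s = f a + ∫ θ in a..s, (g a + ∫ β in a..θ, h β) := by
        rw [hf s hs, intervalIntegral.integral_congr fun θ hθ =>
          hg θ (hsub (by rwa [uIcc_of_le hs.1] at hθ))]
    _ = f a + (s - a) * g a + ∫ θ in a..s, ∫ β in θ..s, h θ := by
        rw [intervalIntegral.integral_add intervalIntegrable_const hH,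
          intervalIntegral.integral_const, smul_eq_mul,
          integral_integral_triangle_swap hs.1 (f := fun _ θ => h θ) hprod, add_assoc]
    _ = f a + (s - a) * g a + ∫ θ in a..s, (s - θ) * h θ := by
        simp only [intervalIntegral.integral_const, smul_eq_mul]

end IntervalAnalysis

section MatrixFunctions

variable {ι κ γ : Type*} [Fintype κ]

lemma integral_mulVec_apply (M : Matrix ι κ ℝ) {f : ℝ → κ → ℝ} {c d : ℝ}
    (hf : ∀ j, IntervalIntegrable (fun θ => f θ j) volume c d) (i : ι) :
    ∫ θ in c..d, (M *ᵥ f θ) i = (M *ᵥ fun j => ∫ θ in c..d, f θ j) i := by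
  simp only [mulVec, dotProduct]
  rw [intervalIntegral.integral_finsetSum fun j _ => (hf j).const_mul _]
  exact Finset.sum_congr rfl fun j _ => intervalIntegral.integral_const_mul _ _

lemma integral_mulVec_const_apply {M : ℝ → Matrix ι κ ℝ} (w : κ → ℝ) {c d : ℝ}
    (hM : ∀ i j, IntervalIntegrable (fun θ => M θ i j) volume c d) (i : ι) :
    ∫ θ in c..d, (M θ *ᵥ w) i
      = (Matrix.of (fun i j => ∫ θ in c..d, M θ i j) *ᵥ w) i := by
  simp only [mulVec, dotProduct, of_apply]
  rw [intervalIntegral.integral_finsetSum fun j _ => (hM i j).mul_const _]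
  exact Finset.sum_congr rfl fun j _ => intervalIntegral.integral_mul_const _ _

variable {a b : ℝ}

lemma integrable_mulVec_apply {M : ℝ → Matrix ι κ ℝ} {w : ℝ → κ → ℝ}
    (hM : ∀ i j, MemLp (fun θ => M θ i j) 2 (μab a b))
    (hw : ∀ j, MemLp (fun θ => w θ j) 2 (μab a b)) (i : ι) :
    Integrable (fun θ => (M θ *ᵥ w θ) i) (μab a b) := by
  simp only [mulVec, dotProduct]
  exact integrable_finsetSum _ fun j _ => (hM i j).integrable_mul (hw j)

lemma memLp_mul_apply_of_continuousOn {p : ENNReal} {M : ℝ → Matrix ι κ ℝ}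
    {N : ℝ → Matrix κ γ ℝ} (hM : ∀ i k, MemLp (fun θ => M θ i k) p (μab a b))
    (hN : ∀ k j, ContinuousOn (fun θ => N θ k j) (Icc a b)) (i : ι) (j : γ) :
    MemLp (fun θ => (M θ * N θ) i j) p (μab a b) := by
  simp only [mul_apply]
  exact memLp_finsetSum _ fun k _ => by
    simpa only [mul_comm] using memLp_mul_of_continuousOn (hM i k) (hN k j)

lemma memLp_const_mul_apply {p : ENNReal} (C : Matrix ι κ ℝ) {M : ℝ → Matrix κ γ ℝ}
    (hM : ∀ k j, MemLp (fun θ => M θ k j) p (μab a b)) (i : ι) (j : γ) :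
    MemLp (fun θ => (C * M θ) i j) p (μab a b) := by
  simp only [mul_apply]
  exact memLp_finsetSum _ fun k _ => (hM k j).const_mul _

lemma memLp_mul_const_apply {p : ENNReal} {M : ℝ → Matrix ι κ ℝ}
    (hM : ∀ i k, MemLp (fun θ => M θ i k) p (μab a b)) (C : Matrix κ γ ℝ)
    (i : ι) (j : γ) :
    MemLp (fun θ => (M θ * C) i j) p (μab a b) :=
  memLp_mul_apply_of_continuousOn (N := fun _ => C) hM (fun _ _ => continuousOn_const) i j

lemma continuous_const_mul_apply (C : Matrix ι κ ℝ) {N : ℝ → Matrix κ γ ℝ}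
    (hN : ∀ k j, Continuous fun η => N η k j) (i : ι) (j : γ) :
    Continuous fun η => (C * N η) i j := by
  simp only [mul_apply]
  fun_prop

lemma integrable_prod_mul_mulVec_apply [Fintype γ] {c d : ℝ} {A : ℝ → Matrix ι κ ℝ}
    {K : ℝ × ℝ → Matrix κ γ ℝ} {w : ℝ → γ → ℝ}
    (hA : ∀ i k, IntegrableOn (fun s => A s i k) (Ioc c d))
    (hK : ∀ k l, Continuous fun p => K p k l)
    (hw : ∀ l, IntegrableOn (fun θ => w θ l) (Ioc c d)) (i : ι) :
    Integrable (fun p : ℝ × ℝ => ((A p.1 * K p) *ᵥ w p.2) i)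
      ((volume.restrict (Ioc c d)).prod (volume.restrict (Ioc c d))) := by
  simp only [mulVec, dotProduct, mul_apply, Finset.sum_mul, mul_assoc]
  exact integrable_finsetSum _ fun l _ => integrable_finsetSum _ fun k _ =>
    integrable_prod_mul_of_continuous (hA i k) (hw l) (hK k l)

end MatrixFunctions

section BlockMatrices

variable {n0 n1 n2 : ℕ}

lemma continuous_Tmat_apply (k j : Ic n1 n2) : Continuous fun η => Tmat n1 n2 η k j := by
  rcases k with k | k | k <;> rcases j with j | j | j <;>
    simp only [Tmat, of_apply] <;> (try split_ifs) <;> fun_prop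

lemma continuous_Qmat_apply (k : Ic n1 n2) (j : Ix n0 n1 n2) :
    Continuous fun η => Qmat n0 n1 n2 η k j := by
  rcases k with k | k | k <;> rcases j with j | j | j <;>
    simp only [Qmat, of_apply] <;> (try split_ifs) <;> fun_prop

lemma Tmat_zero : Tmat n1 n2 0 = 1 := by
  ext k j
  rcases k with k | k | k <;> rcases j with j | j | j <;> simp [Tmat, one_apply]

lemma Qmat_eq_add_smul (η : ℝ) :
    Qmat n0 n1 n2 η = Qmat n0 n1 n2 0 + η • (Qmat n0 n1 n2 1 - Qmat n0 n1 n2 0) := by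
  ext k j
  rcases k with k | k | k <;> rcases j with j | j | j <;> simp [Qmat]

lemma U1_mulVec (v : Ix n0 n1 n2 → ℝ) : U1 n0 n1 n2 *ᵥ v = Sum.elim v 0 := by
  ext (i | i) <;> simp [U1, mulVec, dotProduct, ite_mul]

lemma U2_mulVec (w : Ic n1 n2 → ℝ) :
    U2 n0 n1 n2 *ᵥ w = Sum.elim (0 : Ix n0 n1 n2 → ℝ) w := by
  ext (i | i) <;> simp [U2, mulVec, dotProduct, ite_mul]

lemma Tmat_mulVec (η : ℝ) (w : Ic n1 n2 → ℝ) :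
    Tmat n1 n2 η *ᵥ w = Sum.elim (fun j => w (.inl j))
      (Sum.elim (fun j => w (.inr (.inl j)) + η * w (.inr (.inr j)))
        (fun j => w (.inr (.inr j)))) := by
  ext (i | i | i) <;> simp [Tmat, mulVec, dotProduct, Fintype.sum_sum_type, ite_mul]

lemma Qmat_mulVec (η : ℝ) (v : Ix n0 n1 n2 → ℝ) :
    Qmat n0 n1 n2 η *ᵥ v = Sum.elim (fun j => v (.inr (.inl j)))
      (Sum.elim (fun j => η * v (.inr (.inr j))) (fun j => v (.inr (.inr j)))) := by
  ext (i | i | i) <;> simp [Qmat, mulVec, dotProduct, Fintype.sum_sum_type, ite_mul]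

lemma Tstack_mulVec (a b : ℝ) (w : Ic n1 n2 → ℝ) :
    Tstack a b n1 n2 *ᵥ w = Sum.elim (Tmat n1 n2 0 *ᵥ w) (Tmat n1 n2 (b - a) *ᵥ w) := by
  ext (i | i) <;> rfl

lemma Qstack_mulVec (η : ℝ) (v : Ix n0 n1 n2 → ℝ) :
    Qstack n0 n1 n2 η *ᵥ v = Sum.elim (0 : Ic n1 n2 → ℝ) (Qmat n0 n1 n2 η *ᵥ v) := by
  ext (i | i) <;> simp [Qstack, mulVec, dotProduct]

lemma continuous_Qstack_apply (k : Ic n1 n2 ⊕ Ic n1 n2) (j : Ix n0 n1 n2) :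
    Continuous fun η => Qstack n0 n1 n2 η k j := by
  rcases k with k | k
  · exact continuous_const
  · exact continuous_Qmat_apply k j

end BlockMatrices

section States

variable {a b : ℝ} {n0 n1 n2 : ℕ}

lemma continuousOn_of_eq_primitive (hab : a ≤ b) {f g : ℝ → ℝ}
    (hg : Integrable g (μab a b)) (hf : ∀ s ∈ Icc a b, f s = f a + ∫ θ in a..s, g θ) :
    ContinuousOn f (Icc a b) :=
  (continuousOn_const.add (continuousOn_primitive_Icc hab hg)).congr hf

lemma memLp_Dx_apply (x : State a b n0 n1 n2) (j : Ix n0 n1 n2) :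
    MemLp (fun θ => Dx x θ j) 2 (μab a b) := by
  rcases j with j | j | j
  · exact x.memLp_x0.eval j
  · exact x.memLp_dx1.eval j
  · exact x.memLp_ddx2.eval j

lemma continuousOn_xc_apply (hab : a ≤ b) (x : State a b n0 n1 n2) (j : Ic n1 n2) :
    ContinuousOn (fun s => xc x s j) (Icc a b) := by
  rcases j with j | j | j
  · exact continuousOn_of_eq_primitive hab ((x.memLp_dx1.eval j).integrable one_le_two)
      fun s hs => x.ftc_x1 s hs j
  · exact continuousOn_of_eq_primitive hab ((x.memLp_dx2.eval j).integrable one_le_two)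
      fun s hs => x.ftc_x2 s hs j
  · exact continuousOn_of_eq_primitive hab ((x.memLp_ddx2.eval j).integrable one_le_two)
      fun s hs => x.ftc_dx2 s hs j

lemma memLp_xD_apply (hab : a ≤ b) (x : State a b n0 n1 n2) (j : ID n0 n1 n2) :
    MemLp (fun s => xD x s j) 2 (μab a b) := by
  rcases j with j | j
  · exact memLp_Dx_apply x j
  · exact memLp_of_continuousOn_Icc (continuousOn_xc_apply hab x j) 2

lemma xD_eq_U1_mulVec_add_U2_mulVec (x : State a b n0 n1 n2) (s : ℝ) :
    xD x s = U1 n0 n1 n2 *ᵥ Dx x s + U2 n0 n1 n2 *ᵥ xc x s := by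
  ext (i | i) <;> simp [xD, U1_mulVec, U2_mulVec]

lemma xc_eq_Tmat_mulVec_add_integral (hab : a ≤ b) (x : State a b n0 n1 n2) {s : ℝ}
    (hs : s ∈ Icc a b) :
    xc x s = Tmat n1 n2 (s - a) *ᵥ xc x a
      + fun i => ∫ θ in a..s, (Qmat n0 n1 n2 (s - θ) *ᵥ Dx x θ) i := by
  ext (j | j | j) <;>
    simp only [Pi.add_apply, Tmat_mulVec, Qmat_mulVec, xc, Dx, Sum.elim_inl, Sum.elim_inr]
  · exact x.ftc_x1 s hs j
  · exact taylor_of_primitive hab ((x.memLp_ddx2.eval j).integrable one_le_two)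
      (fun s hs => x.ftc_x2 s hs j) (fun s hs => x.ftc_dx2 s hs j) hs
  · exact x.ftc_dx2 s hs j

lemma integrable_Qmat_mulVec_Dx_apply (x : State a b n0 n1 n2) (s : ℝ) (i : Ic n1 n2) :
    Integrable (fun θ => (Qmat n0 n1 n2 (s - θ) *ᵥ Dx x θ) i) (μab a b) :=
  integrable_mulVec_apply (fun k l => memLp_of_continuousOn_Icc
    ((continuous_Qmat_apply k l).comp (continuous_sub_left s)).continuousOn 2)
    (memLp_Dx_apply x) i

end States

section BoundaryConditions

def BIQint (b : ℝ) (n0 n1 n2 : ℕ) (B_I : ℝ → Matrix (Ic n1 n2) (ID n0 n1 n2) ℝ) (θ : ℝ) :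
    Matrix (Ic n1 n2) (Ix n0 n1 n2) ℝ :=
  Matrix.of fun i j => ∫ s in θ..b, (B_I s * U2 n0 n1 n2 * Qmat n0 n1 n2 (s - θ)) i j

/-- The bracket in the definition of `B_Q`, so that `B_Q(θ) = B_T⁻¹ (BTBQ θ)`. -/
def BTBQ (b : ℝ) (n0 n1 n2 : ℕ) (B : Matrix (Ic n1 n2) (Ic n1 n2 ⊕ Ic n1 n2) ℝ)
    (B_I : ℝ → Matrix (Ic n1 n2) (ID n0 n1 n2) ℝ) (θ : ℝ) :
    Matrix (Ic n1 n2) (Ix n0 n1 n2) ℝ :=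
  B_I θ * U1 n0 n1 n2 - B * Qstack n0 n1 n2 (b - θ) + BIQint b n0 n1 n2 B_I θ

variable {a b : ℝ} {n0 n1 n2 : ℕ} {B : Matrix (Ic n1 n2) (Ic n1 n2 ⊕ Ic n1 n2) ℝ}
  {B_I : ℝ → Matrix (Ic n1 n2) (ID n0 n1 n2) ℝ}

lemma continuous_mul_Qstack_apply (i : Ic n1 n2) (j : Ix n0 n1 n2) :
    Continuous fun θ => (B * Qstack n0 n1 n2 (b - θ)) i j :=
  continuous_const_mul_apply B
    (fun k l => (continuous_Qstack_apply k l).comp (continuous_sub_left b)) i j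

/-- `Q` is affine, so the integrand is `X s + (s - θ) Y s` with `X`, `Y` independent of `θ`. -/
lemma continuousOn_BIQint_apply (hab : a ≤ b)
    (hBI : ∀ i j, MemLp (fun s => B_I s i j) 2 (μab a b)) (i : Ic n1 n2) (j : Ix n0 n1 n2) :
    ContinuousOn (fun θ => BIQint b n0 n1 n2 B_I θ i j) (Icc a b) := by
  have hXY : ∀ N : Matrix (Ic n1 n2) (Ix n0 n1 n2) ℝ,
      Integrable (fun s => (B_I s * U2 n0 n1 n2 * N) i j) (μab a b) := fun N =>
    (memLp_mul_const_apply (memLp_mul_const_apply hBI (U2 n0 n1 n2)) N i j).integrable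
      one_le_two
  refine (continuousOn_integral_affine_kernel hab (hXY (Qmat n0 n1 n2 0))
    (hXY (Qmat n0 n1 n2 1 - Qmat n0 n1 n2 0))).congr fun θ _ => ?_
  refine intervalIntegral.integral_congr fun s _ => ?_
  rw [Qmat_eq_add_smul (s - θ), Matrix.mul_add, Matrix.mul_smul, Matrix.add_apply,
    Matrix.smul_apply, smul_eq_mul]

lemma memLp_BTBQ_apply (hab : a ≤ b) (hBI : ∀ i j, MemLp (fun s => B_I s i j) 2 (μab a b))
    (i : Ic n1 n2) (j : Ix n0 n1 n2) :
    MemLp (fun θ => BTBQ b n0 n1 n2 B B_I θ i j) 2 (μab a b) := by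
  simp only [BTBQ, Matrix.add_apply, Matrix.sub_apply]
  exact ((memLp_mul_const_apply hBI (U1 n0 n1 n2) i j).sub
    (memLp_of_continuousOn_Icc (continuous_mul_Qstack_apply i j).continuousOn 2)).add
    (memLp_of_continuousOn_Icc (continuousOn_BIQint_apply hab hBI i j) 2)

lemma mulVec_xb_eq (hab : a ≤ b) (x : State a b n0 n1 n2) :
    B *ᵥ xb x = (B * Tstack a b n1 n2) *ᵥ xc x a
      + fun i => ∫ θ in a..b, ((B * Qstack n0 n1 n2 (b - θ)) *ᵥ Dx x θ) i := by
  have hb : b ∈ Icc a b := right_mem_Icc.mpr hab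
  have hQ : ∀ k, IntervalIntegrable (fun θ => (Qstack n0 n1 n2 (b - θ) *ᵥ Dx x θ) k)
      volume a b :=
    fun k => intervalIntegrable_of_integrable_μab (integrable_mulVec_apply
      (fun k l => memLp_of_continuousOn_Icc
        ((continuous_Qstack_apply k l).comp (continuous_sub_left b)).continuousOn 2)
      (memLp_Dx_apply x) k) (left_mem_Icc.mpr hab) hb
  have hxb : xb x = Tstack a b n1 n2 *ᵥ xc x a
      + fun k => ∫ θ in a..b, (Qstack n0 n1 n2 (b - θ) *ᵥ Dx x θ) k := by
    ext (k | k) <;> simp only [xb, Pi.add_apply, Tstack_mulVec, Qstack_mulVec, Sum.elim_inl,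
      Sum.elim_inr, Pi.zero_apply, intervalIntegral.integral_zero, Tmat_zero, one_mulVec,
      add_zero]
    exact congrFun (xc_eq_Tmat_mulVec_add_integral hab x hb) k
  ext i
  rw [hxb, mulVec_add, mulVec_mulVec, Pi.add_apply, Pi.add_apply, ← integral_mulVec_apply B hQ]
  simp only [mulVec_mulVec]

lemma integral_BI_mulVec_xD (hab : a ≤ b) (hBI : ∀ i j, MemLp (fun s => B_I s i j) 2 (μab a b))
    (x : State a b n0 n1 n2) (i : Ic n1 n2) :
    ∫ s in a..b, (B_I s *ᵥ xD x s) i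
      = (∫ θ in a..b, ((B_I θ * U1 n0 n1 n2) *ᵥ Dx x θ) i)
        + (Matrix.of (fun k l => ∫ s in a..b, (B_I s * U2 n0 n1 n2 * Tmat n1 n2 (s - a)) k l)
            *ᵥ xc x a) i
        + ∫ θ in a..b, (BIQint b n0 n1 n2 B_I θ *ᵥ Dx x θ) i := by
  have ha : a ∈ Icc a b := left_mem_Icc.mpr hab
  have hb : b ∈ Icc a b := right_mem_Icc.mpr hab
  have hii : ∀ {g : ℝ → ℝ}, Integrable g (μab a b) → IntervalIntegrable g volume a b :=
    fun hg => intervalIntegrable_of_integrable_μab hg ha hb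
  set v := Dx x
  set c0 := xc x a
  set f : ℝ → ℝ → ℝ := fun s θ => ((B_I s * U2 n0 n1 n2 * Qmat n0 n1 n2 (s - θ)) *ᵥ v θ) i
  have hU1 := memLp_mul_const_apply hBI (U1 n0 n1 n2)
  have hU2 := memLp_mul_const_apply hBI (U2 n0 n1 n2)
  have hU2T : ∀ k l, MemLp (fun s => (B_I s * U2 n0 n1 n2 * Tmat n1 n2 (s - a)) k l) 2
      (μab a b) :=
    memLp_mul_apply_of_continuousOn (N := fun s => Tmat n1 n2 (s - a)) hU2
      fun k l => ((continuous_Tmat_apply k l).comp (continuous_sub_right a)).continuousOn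
  have hinner : ∀ θ ∈ Icc a b, ∫ s in θ..b, f s θ = (BIQint b n0 n1 n2 B_I θ *ᵥ v θ) i :=
    fun θ hθ => integral_mulVec_const_apply (v θ) (fun k l =>
      intervalIntegrable_of_integrable_μab
        ((memLp_mul_apply_of_continuousOn (N := fun s => Qmat n0 n1 n2 (s - θ)) hU2
          (fun k l => ((continuous_Qmat_apply k l).comp (continuous_sub_right θ)).continuousOn)
          k l).integrable one_le_two) hθ hb) i
  have hprod : Integrable (fun p : ℝ × ℝ => f p.1 p.2)
      ((volume.restrict (Ioc a b)).prod (volume.restrict (Ioc a b))) :=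
    integrable_prod_mul_mulVec_apply (A := fun s => B_I s * U2 n0 n1 n2)
      (K := fun p => Qmat n0 n1 n2 (p.1 - p.2))
      (fun k l => IntegrableOn.mono_set ((hU2 k l).integrable one_le_two) Ioc_subset_Icc_self)
      (fun k l => (continuous_Qmat_apply k l).comp (continuous_fst.sub continuous_snd))
      (fun l => IntegrableOn.mono_set ((memLp_Dx_apply x l).integrable one_le_two)
        Ioc_subset_Icc_self) i
  have hpt : ∀ s ∈ Icc a b, ∫ θ in a..s, f s θ = (B_I s *ᵥ xD x s) i
      - ((B_I s * U1 n0 n1 n2) *ᵥ v s) i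
      - ((B_I s * U2 n0 n1 n2 * Tmat n1 n2 (s - a)) *ᵥ c0) i := by
    intro s hs
    rw [xD_eq_U1_mulVec_add_U2_mulVec, xc_eq_Tmat_mulVec_add_integral hab x hs]
    simp only [mulVec_add, mulVec_mulVec, Pi.add_apply, Matrix.mul_assoc]
    rw [← integral_mulVec_apply _ fun j => intervalIntegrable_of_integrable_μab
      (integrable_Qmat_mulVec_Dx_apply x s j) ha hs]
    simp only [f, mulVec_mulVec, Matrix.mul_assoc]
    ring
  have hT : ∫ s in a..b, ((B_I s * U2 n0 n1 n2 * Tmat n1 n2 (s - a)) *ᵥ c0) i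
      = (Matrix.of (fun k l => ∫ s in a..b, (B_I s * U2 n0 n1 n2 * Tmat n1 n2 (s - a)) k l)
          *ᵥ c0) i :=
    integral_mulVec_const_apply c0 (fun k l => hii ((hU2T k l).integrable one_le_two)) i
  have hE : ∫ θ in a..b, (BIQint b n0 n1 n2 B_I θ *ᵥ v θ) i
      = ∫ s in a..b, ((B_I s *ᵥ xD x s) i
          - ((B_I s * U1 n0 n1 n2) *ᵥ v s) i
          - ((B_I s * U2 n0 n1 n2 * Tmat n1 n2 (s - a)) *ᵥ c0) i) := by
    rw [← intervalIntegral.integral_congr fun θ hθ =>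
        hinner θ (by rwa [uIcc_of_le hab] at hθ),
      ← integral_integral_triangle_swap hab hprod]
    exact intervalIntegral.integral_congr fun s hs => hpt s (by rwa [uIcc_of_le hab] at hs)
  have hD : IntervalIntegrable (fun s => (B_I s *ᵥ xD x s) i) volume a b :=
    hii (integrable_mulVec_apply hBI (memLp_xD_apply hab x) i)
  have hDU1 : IntervalIntegrable (fun s => ((B_I s * U1 n0 n1 n2) *ᵥ v s) i) volume a b :=
    hii (integrable_mulVec_apply hU1 (memLp_Dx_apply x) i)
  have hDU2T : IntervalIntegrable
      (fun s => ((B_I s * U2 n0 n1 n2 * Tmat n1 n2 (s - a)) *ᵥ c0) i) volume a b :=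
    hii (integrable_mulVec_apply hU2T (fun j => memLp_const (c0 j)) i)
  rw [hE, intervalIntegral.integral_sub (hD.sub hDU1) hDU2T,
    intervalIntegral.integral_sub hD hDU1, hT]
  ring

lemma BT_mulVec_xc_left (hab : a ≤ b) (hBI : ∀ i j, MemLp (fun s => B_I s i j) 2 (μab a b))
    {x : State a b n0 n1 n2} (hx : BCholds a b n0 n1 n2 B B_I x) :
    BT a b n0 n1 n2 B B_I *ᵥ xc x a
      = fun i => ∫ θ in a..b, (BTBQ b n0 n1 n2 B B_I θ *ᵥ Dx x θ) i := by
  ext i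
  have hii : ∀ {g : ℝ → ℝ}, Integrable g (μab a b) → IntervalIntegrable g volume a b :=
    fun hg => intervalIntegrable_of_integrable_μab hg (left_mem_Icc.mpr hab)
      (right_mem_Icc.mpr hab)
  have hU1 : IntervalIntegrable (fun θ => ((B_I θ * U1 n0 n1 n2) *ᵥ Dx x θ) i) volume a b :=
    hii (integrable_mulVec_apply (memLp_mul_const_apply hBI (U1 n0 n1 n2)) (memLp_Dx_apply x) i)
  have hQ : IntervalIntegrable (fun θ => ((B * Qstack n0 n1 n2 (b - θ)) *ᵥ Dx x θ) i)
      volume a b :=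
    hii (integrable_mulVec_apply (M := fun θ => B * Qstack n0 n1 n2 (b - θ))
      (fun k l => memLp_of_continuousOn_Icc (continuous_mul_Qstack_apply k l).continuousOn 2)
      (memLp_Dx_apply x) i)
  have hE : IntervalIntegrable (fun θ => (BIQint b n0 n1 n2 B_I θ *ᵥ Dx x θ) i) volume a b :=
    hii (integrable_mulVec_apply
      (fun k l => memLp_of_continuousOn_Icc (continuousOn_BIQint_apply hab hBI k l) 2)
      (memLp_Dx_apply x) i)
  have hbc := hx i
  rw [mulVec_xb_eq hab x, integral_BI_mulVec_xD hab hBI x i, Pi.add_apply] at hbc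
  simp only [BT, BTBQ, sub_mulVec, add_mulVec, Pi.add_apply, Pi.sub_apply]
  rw [intervalIntegral.integral_add (hU1.sub hQ) hE, intervalIntegral.integral_sub hU1 hQ]
  linarith

lemma xc_left_eq_integral_BQ (hab : a ≤ b)
    (hBI : ∀ i j, MemLp (fun s => B_I s i j) 2 (μab a b)) (hadm : Admissible a b n0 n1 n2 B B_I)
    {x : State a b n0 n1 n2} (hx : BCholds a b n0 n1 n2 B B_I x) :
    xc x a = fun k => ∫ θ in a..b, (BQ a b n0 n1 n2 B B_I θ *ᵥ Dx x θ) k := by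
  have hBTBQ : ∀ j, IntervalIntegrable (fun θ => (BTBQ b n0 n1 n2 B B_I θ *ᵥ Dx x θ) j)
      volume a b := fun j => intervalIntegrable_of_integrable_μab
    (integrable_mulVec_apply (memLp_BTBQ_apply hab hBI) (memLp_Dx_apply x) j)
    (left_mem_Icc.mpr hab) (right_mem_Icc.mpr hab)
  set BT := BT a b n0 n1 n2 B B_I
  ext k
  calc xc x a k = (BT⁻¹ *ᵥ (BT *ᵥ xc x a)) k := by
        rw [mulVec_mulVec, nonsing_inv_mul _ hadm, one_mulVec]
    _ = ∫ θ in a..b, (BT⁻¹ *ᵥ (BTBQ b n0 n1 n2 B B_I θ *ᵥ Dx x θ)) k := by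
        rw [BT_mulVec_xc_left hab hBI hx, integral_mulVec_apply _ hBTBQ]
    _ = ∫ θ in a..b, (BQ a b n0 n1 n2 B B_I θ *ᵥ Dx x θ) k := by
        simp only [mulVec_mulVec]
        rfl

lemma xD_eq_of_mem_Icc (hab : a ≤ b) (hBI : ∀ i j, MemLp (fun s => B_I s i j) 2 (μab a b))
    (hadm : Admissible a b n0 n1 n2 B B_I) {x : State a b n0 n1 n2}
    (hx : BCholds a b n0 n1 n2 B B_I x) {s : ℝ} (hs : s ∈ Icc a b) (i : ID n0 n1 n2) :
    xD x s i = (U1 n0 n1 n2 *ᵥ Dx x s) i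
      + (∫ θ in a..s, (RD1 a b n0 n1 n2 B B_I s θ *ᵥ Dx x θ) i)
      + ∫ θ in s..b, (RD2 a b n0 n1 n2 B B_I s θ *ᵥ Dx x θ) i := by
  have ha : a ∈ Icc a b := left_mem_Icc.mpr hab
  have hb : b ∈ Icc a b := right_mem_Icc.mpr hab
  have hBQ : ∀ k l, MemLp (fun θ => BQ a b n0 n1 n2 B B_I θ k l) 2 (μab a b) :=
    memLp_const_mul_apply _ (memLp_BTBQ_apply hab hBI)
  have hRD2 : Integrable (fun θ => (RD2 a b n0 n1 n2 B B_I s θ *ᵥ Dx x θ) i) (μab a b) :=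
    integrable_mulVec_apply (memLp_const_mul_apply _ hBQ) (memLp_Dx_apply x) i
  have hU2Q : Integrable (fun θ => ((U2 n0 n1 n2 * Qmat n0 n1 n2 (s - θ)) *ᵥ Dx x θ) i)
      (μab a b) :=
    integrable_mulVec_apply (fun k l => memLp_of_continuousOn_Icc ((continuous_const_mul_apply _
      (fun k l => (continuous_Qmat_apply k l).comp (continuous_sub_left s)) k l).continuousOn) 2)
      (memLp_Dx_apply x) i
  have hRD1 : ∫ θ in a..s, (RD1 a b n0 n1 n2 B B_I s θ *ᵥ Dx x θ) i
      = (∫ θ in a..s, (RD2 a b n0 n1 n2 B B_I s θ *ᵥ Dx x θ) i)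
        + ∫ θ in a..s, ((U2 n0 n1 n2 * Qmat n0 n1 n2 (s - θ)) *ᵥ Dx x θ) i := by
    rw [← intervalIntegral.integral_add (intervalIntegrable_of_integrable_μab hRD2 ha hs)
      (intervalIntegrable_of_integrable_μab hU2Q ha hs)]
    simp only [RD1, add_mulVec, Pi.add_apply]
  have hBQv : ∀ j, IntervalIntegrable (fun θ => (BQ a b n0 n1 n2 B B_I θ *ᵥ Dx x θ) j)
      volume a b := fun j => intervalIntegrable_of_integrable_μab
    (integrable_mulVec_apply hBQ (memLp_Dx_apply x) j) ha hb
  have hQv : ∀ j, IntervalIntegrable (fun θ => (Qmat n0 n1 n2 (s - θ) *ᵥ Dx x θ) j)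
      volume a s :=
    fun j => intervalIntegrable_of_integrable_μab (integrable_Qmat_mulVec_Dx_apply x s j) ha hs
  calc xD x s i
      = (U1 n0 n1 n2 *ᵥ Dx x s) i
        + ((U2 n0 n1 n2 * Tmat n1 n2 (s - a)) *ᵥ xc x a) i
        + (U2 n0 n1 n2 *ᵥ fun k => ∫ θ in a..s, (Qmat n0 n1 n2 (s - θ) *ᵥ Dx x θ) k) i := by
        rw [xD_eq_U1_mulVec_add_U2_mulVec, xc_eq_Tmat_mulVec_add_integral hab x hs, mulVec_add,
          mulVec_mulVec]
        simp only [Pi.add_apply, add_assoc]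
    _ = (U1 n0 n1 n2 *ᵥ Dx x s) i
        + (∫ θ in a..b, (RD2 a b n0 n1 n2 B B_I s θ *ᵥ Dx x θ) i)
        + ∫ θ in a..s, ((U2 n0 n1 n2 * Qmat n0 n1 n2 (s - θ)) *ᵥ Dx x θ) i := by
        rw [xc_left_eq_integral_BQ hab hBI hadm hx, ← integral_mulVec_apply _ hBQv,
          ← integral_mulVec_apply _ hQv]
        simp only [mulVec_mulVec]
        rfl
    _ = _ := by
        rw [hRD1, ← intervalIntegral.integral_add_adjacent_intervals
          (intervalIntegrable_of_integrable_μab hRD2 ha hs)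
          (intervalIntegrable_of_integrable_μab hRD2 hs hb)]
        ring

end BoundaryConditions

/-- If `{(n0,n1,n2), B, B_I}` is admissible, then for every `x ∈ X`
the full derivative vector is recovered from the fundamental state:
`x_D(s) = U1 (Dx)(s) + ∫_a^s R_{D,1}(s,θ)(Dx)(θ)dθ + ∫_s^b R_{D,2}(s,θ)(Dx)(θ)dθ`
for almost every `s ∈ [a,b]`. -/
theorem xD_recovery (a b : ℝ) (hab : a < b) (n0 n1 n2 : ℕ)
    (B : Matrix (Ic n1 n2) (Ic n1 n2 ⊕ Ic n1 n2) ℝ)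
    (B_I : ℝ → Matrix (Ic n1 n2) (ID n0 n1 n2) ℝ)
    (hBI : SqIntMat a b B_I)
    (hadm : Admissible a b n0 n1 n2 B B_I)
    (x : State a b n0 n1 n2) (hx : BCholds a b n0 n1 n2 B B_I x) :
    ∀ᵐ s ∂(μab a b), ∀ i, xD x s i =
      (U1 n0 n1 n2).mulVec (Dx x s) i
      + (∫ θ in a..s, (RD1 a b n0 n1 n2 B B_I s θ).mulVec (Dx x θ) i)
      + (∫ θ in s..b, (RD2 a b n0 n1 n2 B B_I s θ).mulVec (Dx x θ) i) :=
  (ae_restrict_mem measurableSet_Icc).mono fun _ hs =>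
    xD_eq_of_mem_Icc hab.le hBI.2 hadm hx hs

end PIEpaper
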